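/- arXiv:1811.11700 — 5 statements merged into one kernel-verified Lean document; each statement's English description precedes it below -/
import Mathlib

section
/- Let OPT > 0 be a real number and I ≥ 1 an integer. Let F_1, …, F_{I+1} be positive integers with F_{I+1} = 1, let h_1, …, h_I be integers with h_n ≥ 2 for all n, and let ΔC_1, …, ΔC_I be nonnegative real numbers such that for every 1 ≤ n ≤ I: F_{n+1} ≤ F_n − (h_n − 1) and ΔC_n / h_n ≤ OPT / F_n. Then Σ_{n=1}^I ΔC_n ≤ 2 · OPT · ln F_1. -/
/-- Abstract form of the approximation-ratio analysis of the GreedyVGSST algorithm: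
`F n` is the number of grade-respecting trees at the start of iteration `n` (with
`F (I+1) = 1`), `h n ≥ 2` is the number of trees merged at iteration `n`, `ΔC n` is the
cost incurred at iteration `n`, and `OPT` the optimal cost.  If `F (n+1) ≤ F n - (h n - 1)`
and `ΔC n / h n ≤ OPT / F n` for `1 ≤ n ≤ I`, then `∑_{n=1}^I ΔC n ≤ 2 OPT ln (F 1)`. -/
theorem greedy_vgsst_analysis (OPT : ℝ) (hOPT : 0 < OPT) (I : ℕ) (hI : 1 ≤ I)
    (F : ℕ → ℕ) (hFpos : ∀ n, 1 ≤ n → n ≤ I + 1 → 0 < F n) (hFend : F (I + 1) = 1)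
    (h : ℕ → ℤ) (hh : ∀ n, 1 ≤ n → n ≤ I → 2 ≤ h n)
    (ΔC : ℕ → ℝ) (hΔC : ∀ n, 1 ≤ n → n ≤ I → 0 ≤ ΔC n)
    (hrec : ∀ n, 1 ≤ n → n ≤ I → (F (n + 1) : ℤ) ≤ (F n : ℤ) - (h n - 1))
    (hratio : ∀ n, 1 ≤ n → n ≤ I → ΔC n / (h n : ℝ) ≤ OPT / (F n : ℝ)) :
    ∑ n ∈ Finset.Icc 1 I, ΔC n ≤ 2 * OPT * Real.log (F 1) := by
  have key : ∀ n ∈ Finset.Icc 1 I,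
      ΔC n ≤ 2 * OPT * (Real.log (F n) - Real.log (F (n + 1))) := by
    intro n hn
    obtain ⟨h1, h2⟩ := Finset.mem_Icc.mp hn
    have hFn : (0 : ℝ) < (F n : ℝ) := by
      exact_mod_cast hFpos n h1 (le_trans h2 (Nat.le_succ I))
    have hFn1 : (0 : ℝ) < (F (n + 1) : ℝ) := by
      exact_mod_cast hFpos (n + 1) (Nat.le_succ_of_le h1) (Nat.succ_le_succ h2)
    have hhn : (2 : ℝ) ≤ (h n : ℝ) := by exact_mod_cast hh n h1 h2
    have hhpos : (0 : ℝ) < (h n : ℝ) := by linarith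
    have hrecR : (F (n + 1) : ℝ) ≤ (F n : ℝ) - ((h n : ℝ) - 1) := by
      exact_mod_cast hrec n h1 h2
    -- step 1: ΔC n ≤ h n * OPT / F n
    have step1 : ΔC n * (F n : ℝ) ≤ (h n : ℝ) * OPT := by
      have := hratio n h1 h2
      rw [div_le_div_iff₀ hhpos hFn] at this
      linarith
    -- step 3: (h n - 1) / F n ≤ log (F n) - log (F (n+1))
    have hlog : Real.log ((F (n+1) : ℝ) / (F n : ℝ)) ≤ (F (n+1) : ℝ) / (F n : ℝ) - 1 :=
      Real.log_le_sub_one_of_pos (div_pos hFn1 hFn)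
    rw [Real.log_div (ne_of_gt hFn1) (ne_of_gt hFn)] at hlog
    have hdiv : ((h n : ℝ) - 1) / (F n : ℝ) ≤ 1 - (F (n+1) : ℝ) / (F n : ℝ) := by
      rw [div_le_iff₀ hFn, sub_mul, one_mul, div_mul_cancel₀ _ (ne_of_gt hFn)]
      linarith
    have step3 : ((h n : ℝ) - 1) / (F n : ℝ) ≤ Real.log (F n) - Real.log (F (n + 1)) := by
      linarith
    -- combine
    have hΔCn := hΔC n h1 h2
    calc ΔC n ≤ (h n : ℝ) * OPT / (F n : ℝ) := by
          rw [le_div_iff₀ hFn]; linarith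
      _ ≤ 2 * OPT * (((h n : ℝ) - 1) / (F n : ℝ)) := by
          rw [mul_div_assoc', div_le_div_iff₀ hFn hFn]
          nlinarith [mul_nonneg (mul_nonneg (by linarith : (0:ℝ) ≤ (h n : ℝ) - 2) hOPT.le) hFn.le]
      _ ≤ 2 * OPT * (Real.log (F n) - Real.log (F (n + 1))) := by
          apply mul_le_mul_of_nonneg_left step3 (by linarith)
  calc ∑ n ∈ Finset.Icc 1 I, ΔC n
      ≤ ∑ n ∈ Finset.Icc 1 I, 2 * OPT * (Real.log (F n) - Real.log (F (n + 1))) :=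
        Finset.sum_le_sum key
    _ = 2 * OPT * ∑ n ∈ Finset.Icc 1 I, (Real.log (F n) - Real.log (F (n + 1))) := by
        rw [Finset.mul_sum]
    _ = 2 * OPT * Real.log (F 1) := by
        have : ∑ n ∈ Finset.Icc 1 I, (Real.log (F n) - Real.log (F (n + 1)))
            = Real.log (F 1) - Real.log (F (I + 1)) := by
          rw [← Finset.Ico_add_one_right_eq_Icc, Finset.sum_Ico_eq_sum_range]
          have h1 : I + 1 - 1 = I := by omega
          rw [h1]
          have := Finset.sum_range_sub' (fun i => Real.log (F (i + 1))) I
          simpa [add_comm] using this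
        rw [this, hFend]
        simp
end

section
/- Let G be a finite connected graph with terminals T ⊆ V(G) and required grades R : T → {1,…,ℓ}, and let (G', y) be a feasible V-GSST solution. Let r ∈ T with R(r) = ℓ. Then there exist a subtree G'' of G' spanning T and assigned grades y' : V(G) → {0,…,ℓ} with y'(v) ≤ y(v) for every v, such that (G'', y') is a feasible V-GSST solution, G'' is a grade-respecting tree rooted at r under y', and G'' is T-optimized. Consequently, for installation costs with 0 = c_0(v) ≤ c_1(v) ≤ … ≤ c_ℓ(v) for all v, the cost of (G'', y') is at most the cost of (G', y); in particular there exists a minimum-cost feasible solution that is a T-optimized grade-respecting tree rooted at r. -/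
/-- `(H, y)` is a feasible V-GSST solution: `H` is a subtree of `G` spanning the terminals `T`,
the grades `y` are at most `ℓ`, vanish outside `H`, satisfy `R v ≤ y v` on terminals, and every
vertex on the unique path in `H` between two terminals `u, v` has grade at least
`min (R u) (R v)`. -/
def VgsstFeasible {V : Type*} {G : SimpleGraph V} (T : Set V) (R : V → ℕ) (ℓ : ℕ)
    (H : G.Subgraph) (y : V → ℕ) : Prop :=
  H.Connected ∧ H.coe.IsAcyclic ∧ T ⊆ H.verts ∧
  (∀ v : V, y v ≤ ℓ) ∧ (∀ v : V, v ∉ H.verts → y v = 0) ∧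
  (∀ v ∈ T, R v ≤ y v) ∧
  (∀ u ∈ T, ∀ v ∈ T, ∀ (hu : u ∈ H.verts) (hv : v ∈ H.verts),
    ∀ p : H.coe.Walk ⟨u, hu⟩ ⟨v, hv⟩,
      p.IsPath → ∀ w ∈ p.support, min (R u) (R v) ≤ y w.1)

/-- The cost of a solution: the sum of the installation costs `c (y v) v` over the vertices of
`H`. -/
noncomputable def vgsstCost {V : Type*} [Fintype V] {G : SimpleGraph V}
    (c : ℕ → V → ℝ) (H : G.Subgraph) (y : V → ℕ) : ℝ :=
  ∑ v : V, H.verts.indicator (fun v => c (y v) v) v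

/-- `H` with labels `y` is a grade-respecting tree rooted at `r`: the labels along the unique
path in `H` from `r` to any vertex are non-increasing. -/
def IsGRTRootedAt {V : Type*} {G : SimpleGraph V} (H : G.Subgraph) (y : V → ℕ) (r : V) : Prop :=
  ∃ hr : r ∈ H.verts, ∀ (v : H.verts) (p : H.coe.Walk ⟨r, hr⟩ v),
    p.IsPath → (p.support.map fun w => y w.1).Chain' (fun a b => b ≤ a)

/-- `H` (a grade-respecting tree rooted at `r` with labels `y`) is `M`-optimized: every leaf of
`H` belongs to `M`, and for every vertex `v ∉ M` of `H`, `y v` is the maximum of `y w` over the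
vertices `w ∈ M` lying in the subtree rooted at `v` (i.e. such that `v` lies on the unique path
from `r` to `w`). -/
def IsOptimizedFor {V : Type*} {G : SimpleGraph V} (H : G.Subgraph) (y : V → ℕ) (r : V)
    (M : Set V) : Prop :=
  ∃ hr : r ∈ H.verts,
    (∀ v ∈ H.verts, (H.neighborSet v).ncard = 1 → v ∈ M) ∧
    (∀ v, ∀ hv : v ∈ H.verts, v ∉ M →
      IsGreatest {n : ℕ | ∃ w, ∃ hw : w ∈ H.verts, w ∈ M ∧
        (∀ p : H.coe.Walk ⟨r, hr⟩ ⟨w, hw⟩, p.IsPath →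
          (⟨v, hv⟩ : H.verts) ∈ p.support) ∧ y w = n} (y v))


/-!
Root the tree `H` at the terminal `r`. Keep only the union `H'` of the paths of `H` from `r` to
the terminals, and give each vertex `v` of `H'` the largest required grade of a terminal whose
root path passes through `v`. Since `R r = ℓ` is maximal, feasibility of `(H, y)` on the path
from `r` to a terminal `t` says that every vertex on it has grade at least `R t`; hence the new
grades never exceed the old ones, and with monotone costs the cost cannot increase. The new
grades only decrease away from the root, every leaf of `H'` ends a root path and so is a
terminal, and a path in `H'` between two terminals `u, v` runs inside the union of their root
paths, so each of its vertices has new grade at least `min (R u) (R v)`.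
-/

namespace SimpleGraph

variable {V : Type*} {G : SimpleGraph V}

lemma Walk.toSubgraph_takeUntil_le [DecidableEq V] {u v w : V} (p : G.Walk u w)
    (h : v ∈ p.support) : (p.takeUntil v h).toSubgraph ≤ p.toSubgraph := by
  conv_rhs => rw [← p.take_spec h]
  rw [Walk.toSubgraph_append]
  exact le_sup_left

lemma Walk.IsPath.two_le_ncard_neighborSet [Finite V] {u w v : V} {p : G.Walk u w}
    (hp : p.IsPath) {K : G.Subgraph} (hpK : p.toSubgraph ≤ K) (hv : v ∈ p.support)
    (hvu : v ≠ u) (hvw : v ≠ w) : 2 ≤ (K.neighborSet v).ncard := by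
  obtain ⟨i, rfl, hi⟩ := Walk.mem_support_iff_exists_getVert.mp hv
  have hi0 : i ≠ 0 := by rintro rfl; exact hvu p.getVert_zero
  have hil : i < p.length := lt_of_le_of_ne hi (by rintro rfl; exact hvw p.getVert_length)
  rw [← hp.ncard_neighborSet_toSubgraph_internal_eq_two hi0 hil]
  exact Set.ncard_le_ncard (Subgraph.neighborSet_subset_of_subgraph hpK _) (Set.toFinite _)

namespace Subgraph

variable {H K : G.Subgraph} {r u v w : V}

lemma toSubgraph_map_hom_le {a b : H.verts} (p : H.coe.Walk a b) :
    (p.map H.hom).toSubgraph ≤ H := by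
  rw [Walk.toSubgraph_map]
  exact coeSubgraph_le _

lemma support_map_hom {a b : H.verts} (p : H.coe.Walk a b) :
    (p.map H.hom).support = p.support.map Subtype.val :=
  Walk.support_map _ _

lemma mem_support_map_hom_iff {a b x : H.verts} (p : H.coe.Walk a b) :
    x.1 ∈ (p.map H.hom).support ↔ x ∈ p.support := by
  rw [support_map_hom]
  exact List.mem_map_of_injective Subtype.val_injective

lemma exists_map_hom_eq {p : G.Walk u v} (hp : p.toSubgraph ≤ H) :
    ∃ q : H.coe.Walk ⟨u, verts_mono hp p.start_mem_verts_toSubgraph⟩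
      ⟨v, verts_mono hp p.end_mem_verts_toSubgraph⟩, q.map H.hom = p :=
  ⟨p.mapToSubgraph.map (inclusion hp), (Walk.map_map _ _ _).trans p.map_mapToSubgraph_hom⟩

lemma eq_of_isPath_of_toSubgraph_le (hH : H.coe.IsAcyclic) {p q : G.Walk u v} (hp : p.IsPath)
    (hq : q.IsPath) (hpH : p.toSubgraph ≤ H) (hqH : q.toSubgraph ≤ H) : p = q := by
  obtain ⟨p', hp'⟩ := exists_map_hom_eq hpH
  obtain ⟨q', hq'⟩ := exists_map_hom_eq hqH
  rw [← hp'] at hp ⊢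
  rw [← hq'] at hq ⊢
  exact congrArg (Walk.map H.hom)
    (congrArg Subtype.val ((hH.subsingleton_path _ _).elim ⟨p', hp.of_map⟩ ⟨q', hq.of_map⟩))

lemma Connected.exists_isPath (hH : H.Connected) (hu : u ∈ H.verts) (hv : v ∈ H.verts) :
    ∃ p : G.Walk u v, p.IsPath ∧ p.toSubgraph ≤ H := by
  classical
  obtain ⟨q⟩ := hH ⟨u, hu⟩ ⟨v, hv⟩
  exact ⟨(q.map H.hom).bypass, Walk.bypass_isPath _,
    Walk.toSubgraph_bypass_le_toSubgraph.trans (toSubgraph_map_hom_le q)⟩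

/-- An acyclic `H` has at most one such path (`eq_of_isPath_of_toSubgraph_le`), so this says that
`v` lies on the path in `H` from `r` to `w`, and that this path exists. -/
def LiesOnPath (H : G.Subgraph) (r v w : V) : Prop :=
  ∃ p : G.Walk r w, p.IsPath ∧ p.toSubgraph ≤ H ∧ v ∈ p.support

lemma LiesOnPath.mono (hHK : H ≤ K) (h : H.LiesOnPath r v w) : K.LiesOnPath r v w :=
  let ⟨p, hp, hpH, hv⟩ := h
  ⟨p, hp, hpH.trans hHK, hv⟩

lemma LiesOnPath.mem_verts (h : H.LiesOnPath r v w) : v ∈ H.verts :=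
  let ⟨p, _, hpH, hv⟩ := h
  verts_mono hpH ((Walk.mem_verts_toSubgraph p).mpr hv)

lemma LiesOnPath.right (h : H.LiesOnPath r v w) : H.LiesOnPath r w w :=
  let ⟨p, hp, hpH, _⟩ := h
  ⟨p, hp, hpH, p.end_mem_support⟩

lemma Connected.liesOnPath_self (hH : H.Connected) (hr : r ∈ H.verts) (hv : v ∈ H.verts) :
    H.LiesOnPath r v v :=
  let ⟨p, hp, hpH⟩ := hH.exists_isPath hr hv
  ⟨p, hp, hpH, p.end_mem_support⟩

lemma LiesOnPath.mem_support (hH : H.coe.IsAcyclic) (h : H.LiesOnPath r v w) {p : G.Walk r w}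
    (hp : p.IsPath) (hpH : p.toSubgraph ≤ H) : v ∈ p.support := by
  obtain ⟨q, hq, hqH, hv⟩ := h
  rwa [eq_of_isPath_of_toSubgraph_le hH hq hp hqH hpH] at hv

lemma LiesOnPath.trans (hH : H.coe.IsAcyclic) (huv : H.LiesOnPath r u v)
    (hvw : H.LiesOnPath r v w) : H.LiesOnPath r u w := by
  classical
  obtain ⟨p, hp, hpH, hv⟩ := hvw
  have hu := huv.mem_support hH (hp.takeUntil hv) ((p.toSubgraph_takeUntil_le hv).trans hpH)
  exact ⟨p, hp, hpH, p.support_takeUntil_subset_support hv hu⟩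

lemma liesOnPath_of_mem_support {a b x : H.verts} {p : H.coe.Walk a b} (hp : p.IsPath)
    (hx : x ∈ p.support) : H.LiesOnPath a x b :=
  ⟨p.map H.hom, hp.map hom_injective, toSubgraph_map_hom_le p,
    (mem_support_map_hom_iff p).mpr hx⟩

lemma mem_support_of_liesOnPath (hH : H.coe.IsAcyclic) {a b x : H.verts} {p : H.coe.Walk a b}
    (hp : p.IsPath) (h : H.LiesOnPath a x b) : x ∈ p.support :=
  (mem_support_map_hom_iff p).mp
    (h.mem_support hH (hp.map hom_injective) (toSubgraph_map_hom_le p))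

lemma liesOnPath_or_liesOnPath (hH : H.coe.IsAcyclic) {p : G.Walk u v} (hp : p.IsPath)
    (hpH : p.toSubgraph ≤ H) (hw : w ∈ p.support) {qu : G.Walk r u} (hqu : qu.IsPath)
    (hquH : qu.toSubgraph ≤ H) {qv : G.Walk r v} (hqv : qv.IsPath) (hqvH : qv.toSubgraph ≤ H) :
    H.LiesOnPath r w u ∨ H.LiesOnPath r w v := by
  classical
  have hle : (qu.reverse.append qv).bypass.toSubgraph ≤ H := by
    refine Walk.toSubgraph_bypass_le_toSubgraph.trans ?_
    rw [Walk.toSubgraph_append, Walk.toSubgraph_reverse]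
    exact sup_le hquH hqvH
  rw [eq_of_isPath_of_toSubgraph_le hH hp (Walk.bypass_isPath _) hpH hle] at hw
  have hw := Walk.support_bypass_subset_support _ hw
  rw [Walk.support_append, Walk.support_reverse, List.mem_append, List.mem_reverse] at hw
  exact hw.imp (fun h => ⟨qu, hqu, hquH, h⟩) (fun h => ⟨qv, hqv, hqvH, List.mem_of_mem_tail h⟩)

lemma isChain_map_support_of_antitone {α : Type*} [Preorder α] {f : V → α}
    (hf : ∀ {v w}, H.LiesOnPath r v w → f w ≤ f v) {x : V} (p : G.Walk r x) (hp : p.IsPath)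
    (hpH : p.toSubgraph ≤ H) : (p.support.map f).IsChain (fun a b => b ≤ a) := by
  induction p using Walk.concatRec with
  | Hnil => exact List.isChain_singleton _
  | Hconcat q h ih =>
    have hqH : q.toSubgraph ≤ H := by
      rw [Walk.concat_eq_append, Walk.toSubgraph_append] at hpH
      exact le_sup_left.trans hpH
    have hq : q.IsPath := by
      rw [Walk.concat_eq_append] at hp
      exact hp.of_append_left
    rw [Walk.support_concat, List.map_append, List.isChain_append]
    refine ⟨ih hf hq hqH, List.isChain_singleton _, ?_⟩
    have hlast : q.support.getLast? = some _ :=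
      List.getLast?_eq_some_getLast q.support_ne_nil |>.trans (congrArg _ q.getLast_support)
    simp only [List.getLast?_map, hlast, Option.map_some, Option.mem_def, Option.some.injEq,
      List.map_cons, List.map_nil, List.head?_cons]
    rintro _ rfl _ rfl
    exact hf ⟨q.concat h, hp, hpH, by simp [Walk.support_concat]⟩

section PathUnion

variable {T : Set V}

def pathUnion (H : G.Subgraph) (r : V) (T : Set V) : G.Subgraph :=
  ⨆ (t ∈ T) (p : G.Walk r t) (_ : p.IsPath ∧ p.toSubgraph ≤ H), p.toSubgraph

lemma pathUnion_le : H.pathUnion r T ≤ H :=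
  iSup₂_le fun _ _ => iSup₂_le fun _ hp => hp.2

lemma toSubgraph_le_pathUnion {t : V} (ht : t ∈ T) {p : G.Walk r t} (hp : p.IsPath)
    (hpH : p.toSubgraph ≤ H) : p.toSubgraph ≤ H.pathUnion r T :=
  le_iSup₂_of_le t ht <| le_iSup₂_of_le p ⟨hp, hpH⟩ le_rfl

lemma mem_verts_pathUnion : v ∈ (H.pathUnion r T).verts ↔ ∃ t ∈ T, H.LiesOnPath r v t := by
  simp only [pathUnion, LiesOnPath, verts_iSup, Set.mem_iUnion, Walk.mem_verts_toSubgraph]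
  grind

lemma LiesOnPath.pathUnion {t : V} (ht : t ∈ T) (h : H.LiesOnPath r v t) :
    (H.pathUnion r T).LiesOnPath r v t :=
  let ⟨p, hp, hpH, hv⟩ := h
  ⟨p, hp, toSubgraph_le_pathUnion ht hp hpH, hv⟩

lemma root_mem_verts_pathUnion (hr : r ∈ H.verts) (hrT : r ∈ T) :
    r ∈ (H.pathUnion r T).verts :=
  mem_verts_pathUnion.mpr ⟨r, hrT, Walk.nil, Walk.IsPath.nil, by simpa using hr, by simp⟩

lemma pathUnion_connected (hr : r ∈ H.verts) (hrT : r ∈ T) : (H.pathUnion r T).Connected := by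
  have hr' := root_mem_verts_pathUnion hr hrT
  have hreach : ∀ x, (H.pathUnion r T).coe.Reachable ⟨r, hr'⟩ x := by
    rintro ⟨x, hx⟩
    obtain ⟨t, ht, p, hp, hpH, hxp⟩ := mem_verts_pathUnion.mp hx
    exact (p.toSubgraph_connected ⟨r, p.start_mem_verts_toSubgraph⟩
      ⟨x, (Walk.mem_verts_toSubgraph p).mpr hxp⟩).map
        (inclusion (toSubgraph_le_pathUnion ht hp hpH))
  rw [Subgraph.connected_iff']
  exact (connected_iff_exists_forall_reachable _).mpr ⟨_, hreach⟩

lemma mem_of_ncard_neighborSet_pathUnion_eq_one [Finite V] (hrT : r ∈ T)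
    (hv : v ∈ (H.pathUnion r T).verts) (h1 : ((H.pathUnion r T).neighborSet v).ncard = 1) :
    v ∈ T := by
  by_contra hvT
  obtain ⟨t, ht, p, hp, hpH, hvp⟩ := mem_verts_pathUnion.mp hv
  have := hp.two_le_ncard_neighborSet (toSubgraph_le_pathUnion ht hp hpH) hvp
    (by rintro rfl; exact hvT hrT) (by rintro rfl; exact hvT ht)
  omega

end PathUnion

section MaxGradeBelow

variable [Fintype V] {T : Set V} {R : V → ℕ}

open Classical in
noncomputable def maxGradeBelow (H : G.Subgraph) (r : V) (T : Set V) (R : V → ℕ) (v : V) : ℕ :=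
  {t | t ∈ T ∧ H.LiesOnPath r v t}.toFinset.sup R

lemma le_maxGradeBelow {t : V} (ht : t ∈ T) (h : H.LiesOnPath r v t) :
    R t ≤ H.maxGradeBelow r T R v := by
  classical
  exact Finset.le_sup (Set.mem_toFinset.mpr ⟨ht, h⟩)

lemma maxGradeBelow_le {n : ℕ} (h : ∀ t ∈ T, H.LiesOnPath r v t → R t ≤ n) :
    H.maxGradeBelow r T R v ≤ n := by
  classical
  exact Finset.sup_le fun t ht => h t (Set.mem_toFinset.mp ht).1 (Set.mem_toFinset.mp ht).2

lemma exists_maxGradeBelow_eq (h : ∃ t ∈ T, H.LiesOnPath r v t) :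
    ∃ t ∈ T, H.LiesOnPath r v t ∧ H.maxGradeBelow r T R v = R t := by
  classical
  obtain ⟨t, ht, h⟩ := h
  obtain ⟨s, hs, heq⟩ := Finset.exists_mem_eq_sup {t | t ∈ T ∧ H.LiesOnPath r v t}.toFinset
    ⟨t, Set.mem_toFinset.mpr ⟨ht, h⟩⟩ R
  exact ⟨s, (Set.mem_toFinset.mp hs).1, (Set.mem_toFinset.mp hs).2, heq⟩

lemma maxGradeBelow_anti (hH : H.coe.IsAcyclic) (h : H.LiesOnPath r v w) :
    H.maxGradeBelow r T R w ≤ H.maxGradeBelow r T R v :=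
  maxGradeBelow_le fun _ ht hw => le_maxGradeBelow ht (h.trans hH hw)

lemma min_le_maxGradeBelow (hH : H.Connected) (hac : H.coe.IsAcyclic) (hr : r ∈ H.verts)
    (hKH : K ≤ H) {a b x : K.verts} {p : K.coe.Walk a b} (hp : p.IsPath) (hx : x ∈ p.support)
    (haT : a.1 ∈ T) (hbT : b.1 ∈ T) : min (R a) (R b) ≤ H.maxGradeBelow r T R x := by
  obtain ⟨p', hp', hp'K, hx'⟩ := liesOnPath_of_mem_support hp hx
  obtain ⟨qa, hqa, hqaH⟩ := hH.exists_isPath hr (verts_mono hKH a.2)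
  obtain ⟨qb, hqb, hqbH⟩ := hH.exists_isPath hr (verts_mono hKH b.2)
  rcases liesOnPath_or_liesOnPath hac hp' (hp'K.trans hKH) hx' hqa hqaH hqb hqbH with ha | hb
  · exact (min_le_left _ _).trans (le_maxGradeBelow haT ha)
  · exact (min_le_right _ _).trans (le_maxGradeBelow hbT hb)

end MaxGradeBelow

section Vgsst

variable [Fintype V] {T : Set V} {R : V → ℕ} {ℓ : ℕ} {y : V → ℕ}

lemma maxGradeBelow_le_of_vgsstFeasible (hfeas : VgsstFeasible T R ℓ H y)
    (hR : ∀ v ∈ T, R v ≤ ℓ) (hrT : r ∈ T) (hRr : R r = ℓ) (v : V) :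
    H.maxGradeBelow r T R v ≤ y v := by
  classical
  obtain ⟨hH, hac, hTH, -, -, -, hpath⟩ := hfeas
  refine maxGradeBelow_le fun t ht hvt => ?_
  obtain ⟨q⟩ := hH ⟨r, hTH hrT⟩ ⟨t, hTH ht⟩
  have hv := mem_support_of_liesOnPath (x := ⟨v, hvt.mem_verts⟩) hac q.toPath.2 hvt
  simpa [hRr, hR t ht] using hpath r hrT t ht _ _ _ q.toPath.2 _ hv

lemma vgsstFeasible_pathUnion (hfeas : VgsstFeasible T R ℓ H y) (hR : ∀ v ∈ T, R v ≤ ℓ)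
    (hrT : r ∈ T) : VgsstFeasible T R ℓ (H.pathUnion r T) (H.maxGradeBelow r T R) := by
  obtain ⟨hH, hac, hTH, -, -, -, -⟩ := hfeas
  have hself : ∀ t ∈ T, H.LiesOnPath r t t := fun t ht => hH.liesOnPath_self (hTH hrT) (hTH ht)
  refine ⟨pathUnion_connected (hTH hrT) hrT, hac.comap _ (inclusion.injective pathUnion_le),
    fun t ht => mem_verts_pathUnion.mpr ⟨t, ht, hself t ht⟩,
    fun v => maxGradeBelow_le fun t ht _ => hR t ht, fun v hv => ?_,
    fun t ht => le_maxGradeBelow ht (hself t ht),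
    fun u hu v hv _ _ p hp x hx => min_le_maxGradeBelow hH hac (hTH hrT) pathUnion_le hp hx hu hv⟩
  exact Nat.le_zero.mp <| maxGradeBelow_le fun t ht hvt =>
    absurd (mem_verts_pathUnion.mpr ⟨t, ht, hvt⟩) hv

lemma isGRTRootedAt_pathUnion (hac : H.coe.IsAcyclic) (hr : r ∈ H.verts) (hrT : r ∈ T) :
    IsGRTRootedAt (H.pathUnion r T) (H.maxGradeBelow r T R) r := by
  refine ⟨root_mem_verts_pathUnion hr hrT, fun v p hp => ?_⟩
  have := isChain_map_support_of_antitone (maxGradeBelow_anti (T := T) (R := R) hac)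
    (p.map (H.pathUnion r T).hom) (hp.map hom_injective)
    ((toSubgraph_map_hom_le p).trans pathUnion_le)
  rwa [support_map_hom, List.map_map] at this

lemma isOptimizedFor_pathUnion (hac : H.coe.IsAcyclic) (hr : r ∈ H.verts) (hrT : r ∈ T) :
    IsOptimizedFor (H.pathUnion r T) (H.maxGradeBelow r T R) r T := by
  classical
  have hKac : (H.pathUnion r T).coe.IsAcyclic := hac.comap _ (inclusion.injective pathUnion_le)
  have hr' := root_mem_verts_pathUnion hr hrT
  refine ⟨hr', fun v hv h1 => mem_of_ncard_neighborSet_pathUnion_eq_one hrT hv h1,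
    fun v hv _ => ⟨?_, ?_⟩⟩
  · obtain ⟨t, ht, hvt, heq⟩ := exists_maxGradeBelow_eq (R := R) (mem_verts_pathUnion.mp hv)
    refine ⟨t, mem_verts_pathUnion.mpr ⟨t, ht, hvt.right⟩, ht,
      fun p hp => mem_support_of_liesOnPath hKac hp (hvt.pathUnion ht), ?_⟩
    exact le_antisymm (maxGradeBelow_anti hac hvt) (heq ▸ le_maxGradeBelow ht hvt.right)
  · rintro _ ⟨w, hw, -, hvw, rfl⟩
    obtain ⟨p⟩ := pathUnion_connected hr hrT ⟨r, hr'⟩ ⟨w, hw⟩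
    exact maxGradeBelow_anti hac
      ((liesOnPath_of_mem_support p.toPath.2 (hvw _ p.toPath.2)).mono pathUnion_le)

end Vgsst

end Subgraph

end SimpleGraph

open SimpleGraph Subgraph

lemma vgsstCost_le_vgsstCost {V : Type*} [Fintype V] {G : SimpleGraph V} {c : ℕ → V → ℝ}
    {ℓ : ℕ} (hc0 : ∀ v, c 0 v = 0) (hcmono : ∀ v : V, ∀ i j : ℕ, i ≤ j → j ≤ ℓ → c i v ≤ c j v)
    {H' H : G.Subgraph} (hle : H' ≤ H) {y' y : V → ℕ} (hy : ∀ v, y' v ≤ y v)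
    (hyℓ : ∀ v, y v ≤ ℓ) : vgsstCost c H' y' ≤ vgsstCost c H y := by
  refine Finset.sum_le_sum fun v _ => ?_
  by_cases hv : v ∈ H'.verts
  · rw [Set.indicator_of_mem hv, Set.indicator_of_mem (verts_mono hle hv)]
    exact hcmono v _ _ (hy v) (hyℓ v)
  · rw [Set.indicator_of_notMem hv]
    exact Set.indicator_nonneg (fun v _ => hc0 v ▸ hcmono v 0 _ (Nat.zero_le _) (hyℓ v)) v

theorem exists_grade_respecting_optimal_general {V : Type*} [Fintype V]
    (G : SimpleGraph V)
    (T : Set V) (ℓ : ℕ) (R : V → ℕ) (hR : ∀ v ∈ T, 1 ≤ R v ∧ R v ≤ ℓ)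
    (c : ℕ → V → ℝ) (hc0 : ∀ v, c 0 v = 0)
    (hcmono : ∀ v : V, ∀ i j : ℕ, i ≤ j → j ≤ ℓ → c i v ≤ c j v)
    (H : G.Subgraph) (y : V → ℕ) (hfeas : VgsstFeasible T R ℓ H y)
    (r : V) (hrT : r ∈ T) (hRr : R r = ℓ) :
    ∃ (H' : G.Subgraph) (y' : V → ℕ),
      H' ≤ H ∧ (∀ v : V, y' v ≤ y v) ∧
      VgsstFeasible T R ℓ H' y' ∧
      IsGRTRootedAt H' y' r ∧
      IsOptimizedFor H' y' r T ∧
      vgsstCost c H' y' ≤ vgsstCost c H y := by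
  have hRℓ : ∀ v ∈ T, R v ≤ ℓ := fun v hv => (hR v hv).2
  have hr : r ∈ H.verts := hfeas.2.2.1 hrT
  have hy : ∀ v, H.maxGradeBelow r T R v ≤ y v :=
    maxGradeBelow_le_of_vgsstFeasible hfeas hRℓ hrT hRr
  exact ⟨H.pathUnion r T, H.maxGradeBelow r T R, pathUnion_le, hy,
    vgsstFeasible_pathUnion hfeas hRℓ hrT, isGRTRootedAt_pathUnion hfeas.2.1 hr hrT,
    isOptimizedFor_pathUnion hfeas.2.1 hr hrT,
    vgsstCost_le_vgsstCost hc0 hcmono pathUnion_le hy hfeas.2.2.2.1⟩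

/-- Every feasible V-GSST solution `(H, y)` can be replaced by a feasible solution `(H', y')`
with `H'` a subtree of `H` spanning `T`, `y' ≤ y` pointwise, such that `H'` is a `T`-optimized
grade-respecting tree rooted at a terminal `r` of maximal required grade `ℓ`; for monotone
installation costs its cost is at most that of `(H, y)`.  In particular there is a minimum-cost
feasible solution that is a `T`-optimized grade-respecting tree rooted at `r`. -/
theorem exists_grade_respecting_optimal {V : Type*} [Fintype V]
    (G : SimpleGraph V) (hG : G.Connected)
    (T : Set V) (ℓ : ℕ) (R : V → ℕ) (hR : ∀ v ∈ T, 1 ≤ R v ∧ R v ≤ ℓ)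
    (c : ℕ → V → ℝ) (hc0 : ∀ v, c 0 v = 0)
    (hcmono : ∀ v : V, ∀ i j : ℕ, i ≤ j → j ≤ ℓ → c i v ≤ c j v)
    (H : G.Subgraph) (y : V → ℕ) (hfeas : VgsstFeasible T R ℓ H y)
    (r : V) (hrT : r ∈ T) (hRr : R r = ℓ) :
    ∃ (H' : G.Subgraph) (y' : V → ℕ),
      H' ≤ H ∧ (∀ v : V, y' v ≤ y v) ∧
      VgsstFeasible T R ℓ H' y' ∧
      IsGRTRootedAt H' y' r ∧
      IsOptimizedFor H' y' r T ∧
      vgsstCost c H' y' ≤ vgsstCost c H y :=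
  exists_grade_respecting_optimal_general G T ℓ R hR c hc0 hcmono H y hfeas r hrT hRr
end

section
/- Let 𝒯 be a finite tree, r ∈ V(𝒯), and y : V(𝒯) → ℕ a labeling such that for every v ∈ V(𝒯) the labels along the unique path in 𝒯 from r to v are non-increasing. Then for all u, v ∈ V(𝒯), every vertex w on the unique u–v path in 𝒯 satisfies y(w) ≥ min(y(u), y(v)). -/
/-!
Join `u` and `v` to the root by paths `σ` and `τ`. In a tree the `u`–`v` path is obtained from
the walk `σ⁻¹ τ` by cutting out the detour, so each of its vertices lies on `σ` or on `τ`.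
Labels only decrease from the root outwards, so a vertex of `σ` has label at least `y u`, and a
vertex of `τ` has label at least `y v`.
-/

namespace SimpleGraph

variable {V : Type*} {G : SimpleGraph V}

theorem IsAcyclic.mem_support_of_isPath [DecidableEq V] (hG : G.IsAcyclic) {r u v w : V}
    (σ : G.Walk r u) (τ : G.Walk r v) {p : G.Walk u v} (hp : p.IsPath) (hw : w ∈ p.support) :
    w ∈ σ.support ∨ w ∈ τ.support := by
  have hbypass : (σ.reverse.append τ).bypass = p :=
    congrArg Subtype.val
      ((hG.subsingleton_path u v).elim ⟨_, Walk.bypass_isPath _⟩ ⟨p, hp⟩)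
  have hw' := Walk.support_bypass_subset_support _ (hbypass ▸ hw)
  rw [Walk.support_append, Walk.support_reverse, List.mem_append, List.mem_reverse] at hw'
  exact hw'.imp_right List.mem_of_mem_tail

theorem Walk.apply_le_of_mem_support_of_isChain {α : Type*} [Preorder α] {y : V → α} {u v w : V}
    (p : G.Walk u v) (hp : (p.support.map y).IsChain (fun a b => b ≤ a)) (hw : w ∈ p.support) :
    y v ≤ y w := by
  have hlast : ∀ hne, (p.support.map y).getLast hne = y v := fun _ => by
    rw [List.getLast_map, Walk.getLast_support]
  exact hp.backwards_induction (y v ≤ ·) _ (fun _ _ hba hb => hb.trans hba)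
    (fun hne => (hlast hne).ge) _ (List.mem_map_of_mem hw)

end SimpleGraph

theorem grt_path_min_bound_general {V : Type*}
    (G : SimpleGraph V) (hG : G.IsTree) (r : V) (y : V → ℕ)
    (hGRT : ∀ v : V, ∀ p : G.Walk r v, p.IsPath →
      (p.support.map y).Chain' (fun a b => b ≤ a)) :
    ∀ u v : V, ∀ p : G.Walk u v, p.IsPath → ∀ w ∈ p.support, min (y u) (y v) ≤ y w := by
  classical
  intro u v p hp w hw
  obtain ⟨σ, hσ⟩ := (hG.connected.preconnected r u).exists_isPath
  obtain ⟨τ, hτ⟩ := (hG.connected.preconnected r v).exists_isPath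
  rcases hG.isAcyclic.mem_support_of_isPath σ τ hp hw with hwσ | hwτ
  · exact (min_le_left _ _).trans (σ.apply_le_of_mem_support_of_isChain (hGRT u σ hσ) hwσ)
  · exact (min_le_right _ _).trans (τ.apply_le_of_mem_support_of_isChain (hGRT v τ hτ) hwτ)

/-- In a grade-respecting tree rooted at `r` (the labels `y` are non-increasing along the unique
path from `r` to any vertex), every vertex `w` on the unique path between any two vertices
`u` and `v` satisfies `y w ≥ min (y u) (y v)`. -/
theorem grt_path_min_bound {V : Type*} [Fintype V]
    (G : SimpleGraph V) (hG : G.IsTree) (r : V) (y : V → ℕ)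
    (hGRT : ∀ v : V, ∀ p : G.Walk r v, p.IsPath →
      (p.support.map y).Chain' (fun a b => b ≤ a)) :
    ∀ u v : V, ∀ p : G.Walk u v, p.IsPath → ∀ w ∈ p.support, min (y u) (y v) ≤ y w :=
  grt_path_min_bound_general G hG r y hGRT
end

section
/- Let G be a finite connected graph with terminals T ⊆ V(G), required grades R : T → {1,…,ℓ}, and installation costs with 0 = c_0(v) ≤ c_1(v) ≤ … ≤ c_ℓ(v) for all v. Let (G', y) be a feasible V-GSST solution such that G' is a grade-respecting tree rooted at some r ∈ V(G') with y(r) = ℓ. Then for every grade i ∈ {1,…,ℓ}, the set S_i = {v ∈ V(G') : y(v) ≥ i} contains every terminal v ∈ T with R(v) ≥ i, induces a connected subgraph of G', and satisfies Σ_{v ∈ S_i} c_i(v) ≤ Σ_{v ∈ V(G')} c_{y(v)}(v). -/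
namespace SimpleGraph.Walk

variable {V α : Type*} [Preorder α] {G : SimpleGraph V}

theorem apply_end_le_of_mem_support {f : V → α} {u v : V} (p : G.Walk u v)
    (hp : (p.support.map f).IsChain (fun a b => b ≤ a)) : ∀ w ∈ p.support, f v ≤ f w := by
  induction p with
  | nil => simp
  | cons _ q ih =>
    rw [support_cons, List.map_cons, List.isChain_cons] at hp
    have hq := ih hp.2
    rintro w (_ | ⟨_, hw⟩)
    · exact (hq _ q.start_mem_support).trans (hp.1 _ (by cases q <;> simp))
    · exact hq w hw

end SimpleGraph.Walk

theorem IsGRTRootedAt.connected_induce_level {V : Type*} {G : SimpleGraph V} {H : G.Subgraph}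
    {y : V → ℕ} {r : V} (hgrt : IsGRTRootedAt H y r) (hH : H.Connected) {i : ℕ} (hi : i ≤ y r) :
    (H.coe.induce {v : H.verts | i ≤ y v.1}).Connected := by
  classical
  obtain ⟨hr, hmono⟩ := hgrt
  refine H.coe.induce_connected_of_patches ⟨r, hr⟩ hi fun {v} hv => ?_
  let p := (hH.preconnected ⟨r, hr⟩ v).some.toPath
  refine ⟨{w | w ∈ p.1.support}, fun w hw => ?_, p.1.start_mem_support, p.1.end_mem_support,
    p.1.connected_induce_support.preconnected _ _⟩
  exact le_trans hv (p.1.apply_end_le_of_mem_support (hmono v p.1 p.2) w hw)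

theorem indicator_level_le_indicator {V β : Type*} [Preorder β] [Zero β] (S : Set V)
    (c : ℕ → V → β) (y : V → ℕ) {ℓ i : ℕ} (hc0 : ∀ v, c 0 v = 0)
    (hcmono : ∀ v : V, ∀ i j : ℕ, i ≤ j → j ≤ ℓ → c i v ≤ c j v) {v : V} (hyv : y v ≤ ℓ) :
    ({v : V | v ∈ S ∧ i ≤ y v}).indicator (fun v => c i v) v
      ≤ S.indicator (fun v => c (y v) v) v := by
  by_cases hv : v ∈ S
  · rw [Set.indicator_of_mem hv]
    by_cases hvi : i ≤ y v
    · rw [Set.indicator_of_mem (by exact ⟨hv, hvi⟩)]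
      exact hcmono v i (y v) hvi hyv
    · rw [Set.indicator_of_notMem (fun h => hvi h.2), ← hc0 v]
      exact hcmono v 0 (y v) (Nat.zero_le _) hyv
  · rw [Set.indicator_of_notMem (fun h => hv h.1), Set.indicator_of_notMem hv]

theorem topdown_level_set_bound_general {V : Type*} [Fintype V]
    (G : SimpleGraph V)
    (T : Set V) (ℓ : ℕ) (R : V → ℕ)
    (c : ℕ → V → ℝ) (hc0 : ∀ v, c 0 v = 0)
    (hcmono : ∀ v : V, ∀ i j : ℕ, i ≤ j → j ≤ ℓ → c i v ≤ c j v)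
    (H : G.Subgraph) (y : V → ℕ) (hfeas : VgsstFeasible T R ℓ H y)
    (r : V) (hgrt : IsGRTRootedAt H y r) (hyr : y r = ℓ) :
    ∀ i : ℕ, 1 ≤ i → i ≤ ℓ →
      (∀ v ∈ T, i ≤ R v → v ∈ H.verts ∧ i ≤ y v) ∧
      (H.coe.induce {v : H.verts | i ≤ y v.1}).Connected ∧
      (∑ v : V, ({v : V | v ∈ H.verts ∧ i ≤ y v}).indicator (fun v => c i v) v
        ≤ vgsstCost c H y) := by
  intro i _ hiℓ
  obtain ⟨hconn, -, hTH, hyℓ, -, hRy, -⟩ := hfeas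
  refine ⟨fun v hv hiv => ⟨hTH hv, hiv.trans (hRy v hv)⟩,
    hgrt.connected_induce_level hconn (hyr ▸ hiℓ), ?_⟩
  exact Finset.sum_le_sum fun v _ => indicator_level_le_indicator H.verts c y hc0 hcmono (hyℓ v)

/-- **Key step in the analysis of the top-down heuristic.** If `(H, y)` is a feasible V-GSST
solution which is a grade-respecting tree rooted at a vertex `r` with `y r = ℓ`, then for every
grade `1 ≤ i ≤ ℓ` the level set `S_i = {v ∈ V(H) : y v ≥ i}` contains every terminal of required
grade at least `i`, induces a connected subgraph of `H`, and its total `c_i`-cost is at most the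
cost of `(H, y)`. -/
theorem topdown_level_set_bound {V : Type*} [Fintype V]
    (G : SimpleGraph V) (hG : G.Connected)
    (T : Set V) (ℓ : ℕ) (R : V → ℕ) (hR : ∀ v ∈ T, 1 ≤ R v ∧ R v ≤ ℓ)
    (c : ℕ → V → ℝ) (hc0 : ∀ v, c 0 v = 0)
    (hcmono : ∀ v : V, ∀ i j : ℕ, i ≤ j → j ≤ ℓ → c i v ≤ c j v)
    (H : G.Subgraph) (y : V → ℕ) (hfeas : VgsstFeasible T R ℓ H y)
    (r : V) (hr : r ∈ H.verts) (hgrt : IsGRTRootedAt H y r) (hyr : y r = ℓ) :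
    ∀ i : ℕ, 1 ≤ i → i ≤ ℓ →
      (∀ v ∈ T, i ≤ R v → v ∈ H.verts ∧ i ≤ y v) ∧
      (H.coe.induce {v : H.verts | i ≤ y v.1}).Connected ∧
      (∑ v : V, ({v : V | v ∈ H.verts ∧ i ≤ y v}).indicator (fun v => c i v) v
        ≤ vgsstCost c H y) :=
  topdown_level_set_bound_general G T ℓ R c hc0 hcmono H y hfeas r hgrt hyr
end

section
/- Let 𝒯 be a finite tree rooted at r and let M ⊆ V(𝒯) with |M| ≥ 2 be such that every leaf of 𝒯 belongs to M. Let v be a vertex of maximum distance from r among all vertices whose descendant subtree (i.e., the set consisting of the vertex and all of its descendants with respect to r) contains at least two vertices of M. Then in the subtree of 𝒯 rooted at v, every vertex other than v has at most one child; equivalently, the subtree of 𝒯 rooted at v is a spider with center v. -/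
/-!
Suppose a proper descendant `u` of `v` had two children `x₁ ≠ x₂`. A deepest vertex below `xᵢ`
has no child, so its only neighbour is its parent: it is a leaf, hence lies in `M`. Distinct
vertices of the same depth have disjoint subtrees, so the two leaves differ and the subtree of
`u` contains two vertices of `M`, although `u` is strictly deeper than `v`.
-/

namespace SimpleGraph

variable {V : Type*} {G : SimpleGraph V} {r x u : V}

/-- `G.IsAncestor r x u`: in `G` rooted at `r`, `x` is `u` or an ancestor of `u`. -/
def IsAncestor (G : SimpleGraph V) (r x u : V) : Prop :=
  ∀ p : G.Walk r u, p.IsPath → x ∈ p.support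

lemma isAncestor_refl (G : SimpleGraph V) (r x : V) : G.IsAncestor r x x :=
  fun p _ => p.end_mem_support

lemma IsAncestor.trans {w : V} (hwx : G.IsAncestor r w x) (hxu : G.IsAncestor r x u) :
    G.IsAncestor r w u := by
  classical
  intro p hp
  have hx := hxu p hp
  exact p.support_takeUntil_subset_support hx (hwx _ (hp.takeUntil hx))

namespace IsTree

lemma length_eq_dist_of_isPath (hG : G.IsTree) {a b : V} {p : G.Walk a b} (hp : p.IsPath) :
    p.length = G.dist a b := by
  obtain ⟨q, hq, hql⟩ := hG.connected.exists_path_of_dist a b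
  rw [← hql, (hG.existsUnique_path a b).unique hp hq]

lemma isAncestor_iff_dist_eq_add (hG : G.IsTree) :
    G.IsAncestor r x u ↔ G.dist r u = G.dist r x + G.dist x u := by
  classical
  constructor
  · intro hx
    obtain ⟨p, hp, -⟩ := hG.existsUnique_path r u
    have hsplit := congrArg Walk.length (p.take_spec (hx p hp))
    rw [Walk.length_append, hG.length_eq_dist_of_isPath (hp.takeUntil _),
      hG.length_eq_dist_of_isPath (hp.dropUntil _), hG.length_eq_dist_of_isPath hp] at hsplit
    exact hsplit.symm
  · intro hdist p hp
    obtain ⟨q₁, -, hq₁⟩ := hG.connected.exists_path_of_dist r x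
    obtain ⟨q₂, -, hq₂⟩ := hG.connected.exists_path_of_dist x u
    have hq : (q₁.append q₂).IsPath :=
      Walk.isPath_of_length_eq_dist _ (by rw [Walk.length_append, hq₁, hq₂, hdist])
    rw [(hG.existsUnique_path r u).unique hp hq]
    exact (Walk.mem_support_append_iff _ _).mpr (Or.inl q₁.end_mem_support)

lemma dist_eq_add_one_of_adj_of_isAncestor (hG : G.IsTree) (hadj : G.Adj x u)
    (hx : G.IsAncestor r x u) : G.dist r u = G.dist r x + 1 := by
  rw [(hG.isAncestor_iff_dist_eq_add).mp hx, dist_eq_one_iff_adj.mpr hadj]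

lemma isAncestor_or_isAncestor_of_adj (hG : G.IsTree) (hadj : G.Adj x u) :
    G.IsAncestor r x u ∨ G.IsAncestor r u x := by
  simp only [hG.isAncestor_iff_dist_eq_add, dist_eq_one_iff_adj.mpr hadj,
    dist_eq_one_iff_adj.mpr hadj.symm]
  exact hG.dist_eq_dist_add_one_of_adj r hadj.symm

lemma eq_of_isAncestor_of_dist_eq (hG : G.IsTree) {a b : V} (ha : G.IsAncestor r a u)
    (hb : G.IsAncestor r b u) (hab : G.dist r a = G.dist r b) : a = b := by
  classical
  obtain ⟨p, hp, -⟩ := hG.existsUnique_path r u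
  rw [← p.getVert_length_takeUntil (ha p hp), ← p.getVert_length_takeUntil (hb p hp),
    hG.length_eq_dist_of_isPath (hp.takeUntil _), hG.length_eq_dist_of_isPath (hp.takeUntil _),
    hab]

lemma exists_isAncestor_neighborSet_ncard_eq_one [Finite V] [Nontrivial V] (hG : G.IsTree)
    (r x : V) :
    ∃ m, (G.neighborSet m).ncard = 1 ∧ G.IsAncestor r x m := by
  obtain ⟨w, hxw, hdeepest⟩ := Set.exists_max_image {u | G.IsAncestor r x u} (G.dist r ·)
    (Set.toFinite _) ⟨x, isAncestor_refl G r x⟩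
  have hparent : ∀ z ∈ G.neighborSet w, G.IsAncestor r z w := by
    intro z hz
    refine (hG.isAncestor_or_isAncestor_of_adj hz).resolve_left fun hwz => ?_
    have := hdeepest z (hxw.trans hwz)
    have := hG.dist_eq_add_one_of_adj_of_isAncestor hz hwz
    omega
  have hsub : (G.neighborSet w).Subsingleton := fun a ha b hb => by
    have := hG.dist_eq_add_one_of_adj_of_isAncestor ha.symm (hparent a ha)
    have := hG.dist_eq_add_one_of_adj_of_isAncestor hb.symm (hparent b hb)
    exact hG.eq_of_isAncestor_of_dist_eq (hparent a ha) (hparent b hb) (by omega)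
  obtain ⟨z, hz⟩ := hG.connected.preconnected.exists_adj_of_nontrivial w
  exact ⟨w, Set.ncard_eq_one.mpr ⟨z, hsub.eq_singleton_of_mem hz⟩, hxw⟩

end IsTree

end SimpleGraph

open SimpleGraph in
theorem deepest_branching_is_spider_general {V : Type*} [Fintype V]
    (G : SimpleGraph V) (hG : G.IsTree)
    (r : V) (M : Set V)
    (hleaf : ∀ u : V, (G.neighborSet u).ncard = 1 → u ∈ M)
    (v : V)
    (hmax : ∀ x : V,
      2 ≤ (M ∩ {u : V | ∀ p : G.Walk r u, p.IsPath → x ∈ p.support}).ncard →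
      G.dist r x ≤ G.dist r v) :
    ∀ u : V, (∀ p : G.Walk r u, p.IsPath → v ∈ p.support) → u ≠ v →
      Set.Subsingleton
        {x : V | G.Adj u x ∧ ∀ p : G.Walk r x, p.IsPath → u ∈ p.support} := by
  intro u hvu hne x₁ ⟨hadj₁, hux₁⟩ x₂ ⟨hadj₂, hux₂⟩
  by_contra hx
  have : Nontrivial V := ⟨⟨x₁, x₂, hx⟩⟩
  obtain ⟨m₁, hleaf₁, hx₁m₁⟩ := hG.exists_isAncestor_neighborSet_ncard_eq_one r x₁
  obtain ⟨m₂, hleaf₂, hx₂m₂⟩ := hG.exists_isAncestor_neighborSet_ncard_eq_one r x₂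
  have hm : m₁ ≠ m₂ := by
    rintro rfl
    refine hx (hG.eq_of_isAncestor_of_dist_eq hx₁m₁ hx₂m₂ ?_)
    rw [hG.dist_eq_add_one_of_adj_of_isAncestor hadj₁ hux₁,
      hG.dist_eq_add_one_of_adj_of_isAncestor hadj₂ hux₂]
  have hu : G.dist r v < G.dist r u := by
    rw [(hG.isAncestor_iff_dist_eq_add).mp hvu]
    exact Nat.lt_add_of_pos_right (hG.connected.pos_dist_of_ne (Ne.symm hne))
  refine (hmax u ((Set.one_lt_ncard_iff (Set.toFinite _)).mpr ?_)).not_gt hu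
  exact ⟨m₁, m₂, ⟨hleaf m₁ hleaf₁, IsAncestor.trans hux₁ hx₁m₁⟩,
    ⟨hleaf m₂ hleaf₂, IsAncestor.trans hux₂ hx₂m₂⟩, hm⟩

/-- In a finite tree rooted at `r` in which every leaf belongs to `M` (with `|M| ≥ 2`), let `v`
be a deepest vertex whose descendant subtree contains at least two vertices of `M` (descendants
of `x` are the vertices `u` with `x` on the unique path from `r` to `u`).  Then in the subtree
rooted at `v`, every vertex other than `v` has at most one child; i.e. the subtree rooted at `v`
is a spider with center `v`. -/
theorem deepest_branching_is_spider {V : Type*} [Fintype V]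
    (G : SimpleGraph V) (hG : G.IsTree)
    (r : V) (M : Set V) (hM : 2 ≤ M.ncard)
    (hleaf : ∀ u : V, (G.neighborSet u).ncard = 1 → u ∈ M)
    (v : V)
    (hv : 2 ≤ (M ∩ {u : V | ∀ p : G.Walk r u, p.IsPath → v ∈ p.support}).ncard)
    (hmax : ∀ x : V,
      2 ≤ (M ∩ {u : V | ∀ p : G.Walk r u, p.IsPath → x ∈ p.support}).ncard →
      G.dist r x ≤ G.dist r v) :
    ∀ u : V, (∀ p : G.Walk r u, p.IsPath → v ∈ p.support) → u ≠ v →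
      Set.Subsingleton
        {x : V | G.Adj u x ∧ ∀ p : G.Walk r x, p.IsPath → u ∈ p.support} :=
  deepest_branching_is_spider_general G hG r M hleaf v hmax
end
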